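/- For all τ ∈ ℍ and all z = (z₁,…,z₈) ∈ ℂ⁸ one has 16·η(τ)^{12}·∏_{j=1}^{8} ϑ11(2τ, 2z_j) = ϑ10(τ,0)⁴·∏_{j=1}^{8} (ϑ10(τ,z_j)·ϑ11(τ,z_j)). Equivalently, wherever ∏_{j=1}^{8} ϑ11(τ,z_j) ≠ 0, the Ramond character of the holomorphic super vertex operator algebra F₂₄ with N = 1 structure 𝔤 = A_{1,2}^8 satisfies χ_R(τ,z) = 2^{rk(𝔤)/2}·ϑ_𝔤(2τ,2z)/ϑ_𝔤(τ,z) = η(τ)^{−12}·ϑ10(τ,0)⁴·∏_{j=1}^{8} ϑ10(τ,z_j), where ϑ_𝔤(τ,z) := ∏_{j=1}^{8} ϑ11(τ,z_j) is the denominator of the affine Lie algebra of type A_{1,2}^8 and rk(𝔤) = 8. -/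

import Mathlib

open Complex

/-- `ee w = exp(2πiw)`; thus `q^r = ee (r·τ)` and `ζ^r = ee (r·u)`. -/
noncomputable def ee (w : ℂ) : ℂ := Complex.exp (2 * Real.pi * Complex.I * w)

/-- The Dedekind eta function `η(τ) = q^{1/24} ∏_{n≥1} (1 − qⁿ)`. -/
noncomputable def dedekindEta (τ : UpperHalfPlane) : ℂ :=
  ee ((τ : ℂ) / 24) * ∏' n : ℕ, (1 - ee (((n : ℂ) + 1) * (τ : ℂ)))

/-- `ϑ11(τ,u) = −q^{1/8} ζ^{−1/2} ∏_{n≥1} (1−q^{n−1}ζ)(1−qⁿζ^{−1})(1−qⁿ)`. -/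
noncomputable def th11 (τ : UpperHalfPlane) (u : ℂ) : ℂ :=
  -(ee ((τ : ℂ) / 8) * ee (-u / 2)) *
    ∏' n : ℕ, ((1 - ee ((n : ℂ) * (τ : ℂ)) * ee u) *
      (1 - ee (((n : ℂ) + 1) * (τ : ℂ)) * ee (-u)) * (1 - ee (((n : ℂ) + 1) * (τ : ℂ))))

/-- `ϑ10(τ,u) = q^{1/8}(ζ^{1/2}+ζ^{−1/2}) ∏_{n≥1} (1−qⁿ)(1+qⁿζ)(1+qⁿζ^{−1})`. -/
noncomputable def th10 (τ : UpperHalfPlane) (u : ℂ) : ℂ :=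
  ee ((τ : ℂ) / 8) * (ee (u / 2) + ee (-u / 2)) *
    ∏' n : ℕ, ((1 - ee (((n : ℂ) + 1) * (τ : ℂ))) *
      (1 + ee (((n : ℂ) + 1) * (τ : ℂ)) * ee u) * (1 + ee (((n : ℂ) + 1) * (τ : ℂ)) * ee (-u)))

/-- `2τ` as a point of the upper half-plane. -/
noncomputable def dblH (τ : UpperHalfPlane) : UpperHalfPlane :=
  ⟨2 * (τ : ℂ), by
    have h := τ.im_pos
    rw [Complex.mul_im]
    simp [UpperHalfPlane.coe_im]
    linarith⟩

/-!
Put `q = e(τ)`, `ζ = e(u)` and `P_q(c) = ∏_{n ≥ 1} (1 + c qⁿ)`. Every function in the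
statement is a monomial in `q^{1/8}, ζ^{1/2}` times products of such `P`'s, and
`P_q(c) P_q(-c) = P_{q²}(-c²)`. Pairing the factors of `ϑ10` with those of `ϑ11` in this way
gives `ϑ10(τ,u) ϑ11(τ,u) P_{q²}(-1) = ϑ11(2τ,2u) P_q(-1)²` for every `u`; and since
`ϑ10(τ,0) = 2 q^{1/8} P_q(-1) P_q(1)²` and `P_{q²}(-1) = P_q(1) P_q(-1)`, also
`16 η(τ)¹² P_{q²}(-1)⁸ = ϑ10(τ,0)⁴ P_q(-1)¹⁶`. Multiplying eight identities of the
first kind and cancelling the nonzero factor `P_{q²}(-1)⁸` gives the theorem.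
-/

lemma ee_zero : ee 0 = 1 := by simp [ee]

lemma ee_neg (a : ℂ) : ee (-a) = (ee a)⁻¹ := by
  rw [ee, ee, ← Complex.exp_neg]; ring_nf

lemma ee_nat_mul (n : ℕ) (a : ℂ) : ee (n * a) = ee a ^ n := by
  rw [ee, ee, ← Complex.exp_nat_mul]; ring_nf

lemma ee_two_mul (a : ℂ) : ee (2 * a) = ee a ^ 2 := by
  exact_mod_cast ee_nat_mul 2 a

lemma ee_nat_succ_mul (n : ℕ) (a : ℂ) : ee ((n + 1) * a) = ee a ^ (n + 1) := by
  exact_mod_cast ee_nat_mul (n + 1) a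

lemma norm_ee_lt_one (τ : UpperHalfPlane) : ‖ee τ‖ < 1 := by
  simpa only [ee] using UpperHalfPlane.norm_exp_two_pi_I_lt_one τ

lemma coe_dblH (τ : UpperHalfPlane) : (dblH τ : ℂ) = 2 * τ := rfl

/-- The q-Pochhammer symbol `(-cq; q)_∞`. -/
noncomputable def qProd (q c : ℂ) : ℂ := ∏' n : ℕ, (1 + c * q ^ (n + 1))

section qProd

variable {q : ℂ} (hq : ‖q‖ < 1)
include hq

lemma summable_norm_mul_pow (c : ℂ) : Summable fun n : ℕ => ‖c * q ^ n‖ := by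
  simpa [norm_mul, norm_pow] using
    (summable_geometric_of_lt_one (norm_nonneg q) hq).mul_left ‖c‖

lemma multipliable_one_add_mul_pow (c : ℂ) : Multipliable fun n : ℕ => 1 + c * q ^ n :=
  multipliable_one_add_of_summable (summable_norm_mul_pow hq c)

lemma multipliable_one_add_mul_pow_succ (c : ℂ) :
    Multipliable fun n : ℕ => 1 + c * q ^ (n + 1) :=
  multipliable_one_add_of_summable ((summable_nat_add_iff 1).2 (summable_norm_mul_pow hq c))

lemma tprod_one_add_mul_pow (c : ℂ) : ∏' n : ℕ, (1 + c * q ^ n) = (1 + c) * qProd q c := by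
  rw [tprod_eq_zero_mul' (f := fun n => 1 + c * q ^ n) (multipliable_one_add_mul_pow_succ hq c),
    pow_zero, mul_one, qProd]

lemma qProd_neg_one_ne_zero : qProd q (-1) ≠ 0 := by
  refine tprod_one_add_ne_zero_of_summable (fun n h => ?_)
    ((summable_nat_add_iff 1).2 (summable_norm_mul_pow hq (-1)))
  have : ‖q ^ (n + 1)‖ < 1 := by
    rw [norm_pow]; exact pow_lt_one₀ (norm_nonneg q) hq n.succ_ne_zero
  rw [show q ^ (n + 1) = 1 by linear_combination -h, norm_one] at this
  exact this.false

lemma qProd_mul_qProd_neg (c : ℂ) : qProd q c * qProd q (-c) = qProd (q ^ 2) (-c ^ 2) := by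
  rw [qProd, qProd, qProd, ← (multipliable_one_add_mul_pow_succ hq c).tprod_mul
    (multipliable_one_add_mul_pow_succ hq (-c))]
  exact tprod_congr fun n => by ring

end qProd

section ProductForms

variable (τ : UpperHalfPlane) (u : ℂ)

lemma dedekindEta_eq_qProd : dedekindEta τ = ee (τ / 24) * qProd (ee τ) (-1) := by
  rw [dedekindEta, qProd]
  exact congrArg _ (tprod_congr fun n => by rw [ee_nat_succ_mul]; ring)

lemma dedekindEta_ne_zero : dedekindEta τ ≠ 0 := by
  rw [dedekindEta_eq_qProd]
  exact mul_ne_zero (Complex.exp_ne_zero _) (qProd_neg_one_ne_zero (norm_ee_lt_one τ))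

lemma th11_eq_qProd : th11 τ u = -(ee (τ / 8) * ee (-u / 2)) * ((1 - ee u) *
    qProd (ee τ) (-ee u) * qProd (ee τ) (-(ee u)⁻¹) * qProd (ee τ) (-1)) := by
  have hq := norm_ee_lt_one τ
  have h₁ := multipliable_one_add_mul_pow hq (-ee u)
  have h₂ := multipliable_one_add_mul_pow_succ hq (-(ee u)⁻¹)
  have h₃ := multipliable_one_add_mul_pow_succ hq (-1)
  rw [th11, sub_eq_add_neg 1 (ee u), ← tprod_one_add_mul_pow hq, qProd, qProd,
    ← h₁.tprod_mul h₂, ← (h₁.mul h₂).tprod_mul h₃]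
  exact congrArg _ (tprod_congr fun n => by rw [ee_nat_succ_mul, ee_nat_mul, ee_neg]; ring)

lemma th10_eq_qProd : th10 τ u = ee (τ / 8) * (ee (u / 2) + ee (-u / 2)) *
    (qProd (ee τ) (-1) * qProd (ee τ) (ee u) * qProd (ee τ) (ee u)⁻¹) := by
  have hq := norm_ee_lt_one τ
  have h₁ := multipliable_one_add_mul_pow_succ hq (-1)
  have h₂ := multipliable_one_add_mul_pow_succ hq (ee u)
  have h₃ := multipliable_one_add_mul_pow_succ hq (ee u)⁻¹
  rw [th10, qProd, qProd, qProd, ← h₁.tprod_mul h₂, ← (h₁.mul h₂).tprod_mul h₃]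
  exact congrArg _ (tprod_congr fun n => by rw [ee_nat_succ_mul, ee_neg]; ring)

end ProductForms

lemma th10_mul_th11_mul_qProd (τ : UpperHalfPlane) (u : ℂ) :
    th10 τ u * th11 τ u * qProd (ee τ ^ 2) (-1)
      = th11 (dblH τ) (2 * u) * qProd (ee τ) (-1) ^ 2 := by
  have hq := norm_ee_lt_one τ
  have hτ : ee (dblH τ / 8) = ee (τ / 8) ^ 2 := by rw [coe_dblH, ← ee_two_mul]; ring_nf
  have hu : ee (-(2 * u) / 2) = ee (-(u / 2)) ^ 2 := by rw [← ee_two_mul]; ring_nf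
  have hζ : ee u = ee (u / 2) ^ 2 := by rw [← ee_two_mul]; ring_nf
  rw [th10_eq_qProd, th11_eq_qProd, th11_eq_qProd, hτ, hu, coe_dblH, ee_two_mul (τ : ℂ),
    ee_two_mul u, ← inv_pow, ← qProd_mul_qProd_neg hq, ← qProd_mul_qProd_neg hq, hζ, neg_div,
    ee_neg]
  field_simp [Complex.exp_ne_zero]
  ring

lemma dedekindEta_pow_twelve_mul_qProd (τ : UpperHalfPlane) :
    16 * dedekindEta τ ^ 12 * qProd (ee τ ^ 2) (-1) ^ 8
      = th10 τ 0 ^ 4 * qProd (ee τ) (-1) ^ 16 := by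
  have hq := norm_ee_lt_one τ
  have h : ee (τ / 24) ^ 12 = ee (τ / 8) ^ 4 := by
    rw [← ee_nat_mul, ← ee_nat_mul]; congr 1; push_cast; ring
  have h₂ := qProd_mul_qProd_neg hq 1
  rw [one_pow] at h₂
  rw [dedekindEta_eq_qProd, th10_eq_qProd, ← h₂]
  simp only [neg_zero, zero_div, ee_zero, inv_one]
  linear_combination
    (16 * qProd (ee τ) (-1) ^ 12 * (qProd (ee τ) 1 * qProd (ee τ) (-1)) ^ 8) * h

/-- The Ramond character of the holomorphic SVOA `F₂₄` with `N = 1` structure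
`𝔤 = A_{1,2}⁸`:
`16·η(τ)¹²·∏_{j=1}^{8} ϑ11(2τ,2z_j) = ϑ10(τ,0)⁴·∏_{j=1}^{8} (ϑ10(τ,z_j)ϑ11(τ,z_j))`;
equivalently, wherever `ϑ_𝔤(τ,z) = ∏_{j=1}^{8} ϑ11(τ,z_j) ≠ 0`,
`χ_R(τ,z) = 2^{rk 𝔤/2}·ϑ_𝔤(2τ,2z)/ϑ_𝔤(τ,z) = η(τ)^{−12}·ϑ10(τ,0)⁴·∏_{j=1}^{8} ϑ10(τ,z_j)`. -/
theorem F24_Ramond_character_A1_level2_pow8 (τ : UpperHalfPlane) (z : Fin 8 → ℂ) :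
    16 * dedekindEta τ ^ 12 * ∏ j, th11 (dblH τ) (2 * z j)
      = th10 τ 0 ^ 4 * ∏ j, (th10 τ (z j) * th11 τ (z j)) ∧
    ((∏ j, th11 τ (z j)) ≠ 0 →
      2 ^ 4 * (∏ j, th11 (dblH τ) (2 * z j)) / ∏ j, th11 τ (z j)
        = (dedekindEta τ ^ 12)⁻¹ * th10 τ 0 ^ 4 * ∏ j, th10 τ (z j)) := by
  have hA : qProd (ee τ ^ 2) (-1) ≠ 0 := by
    rw [← ee_two_mul]; exact qProd_neg_one_ne_zero (norm_ee_lt_one (dblH τ))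
  have hprod : (∏ j, (th10 τ (z j) * th11 τ (z j))) * qProd (ee τ ^ 2) (-1) ^ 8
      = (∏ j, th11 (dblH τ) (2 * z j)) * qProd (ee τ) (-1) ^ 16 := by
    rw [show qProd (ee τ) (-1) ^ 16 = (qProd (ee τ) (-1) ^ 2) ^ 8 by ring,
      ← Fin.prod_const 8 (qProd (ee τ ^ 2) (-1)), ← Fin.prod_const 8 (qProd (ee τ) (-1) ^ 2),
      ← Finset.prod_mul_distrib, ← Finset.prod_mul_distrib]
    exact Finset.prod_congr rfl fun j _ => th10_mul_th11_mul_qProd τ (z j)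
  have key : 16 * dedekindEta τ ^ 12 * ∏ j, th11 (dblH τ) (2 * z j)
      = th10 τ 0 ^ 4 * ∏ j, (th10 τ (z j) * th11 τ (z j)) :=
    mul_right_cancel₀ (pow_ne_zero 8 hA) (by
      linear_combination (∏ j, th11 (dblH τ) (2 * z j)) * dedekindEta_pow_twelve_mul_qProd τ
        - th10 τ 0 ^ 4 * hprod)
  refine ⟨key, fun hθ => ?_⟩
  have hη := dedekindEta_ne_zero τ
  rw [Finset.prod_mul_distrib] at key
  field_simp
  linear_combination key
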